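/- For any small category C, the functor from C to the over category Cat/C sending an object x to the slice projection (Over x, Over.forget x : Over x ⥤ C) and a morphism f : x ⟶ y to Over.map f induces an equivalence of categories between C and the full subcategory of Cat/C spanned by the slice projections Over.forget x for x an object of C; that is, this functor exhibits C as a full subcategory of Cat/C. -/

import Mathlib

/-!
A functor `G : Over x ⥤ Over y` commuting with the projections to `C` is forced to be
`Over.map f` with `f := (G.obj (Over.mk (𝟙 x))).hom`: the unique map `a ⟶ Over.mk (𝟙 x)` has
underlying arrow `a.hom`, and `G` sends it to an arrow with the same underlying morphism, so
`(G.obj a).hom = a.hom ≫ f`. Hence `x ↦ Over.forget x` is full; it is faithful since `Over.map f`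
sends `Over.mk (𝟙 x)` to `Over.mk f`; and it is surjective onto the subcategory by definition.
-/

open CategoryTheory

universe u

def sliceOverFunctor (C : Type u) [SmallCategory C] : C ⥤ Over (Cat.of C) where
  obj x := Over.mk (Y := Cat.of (Over x)) ((Over.forget x).toCatHom : Cat.of (Over x) ⟶ Cat.of C)
  map {x y} f :=
    Over.homMk ((Over.map f).toCatHom : Cat.of (Over x) ⟶ Cat.of (Over y)) (congrArg Functor.toCatHom (Over.mapForget_eq f))
  map_id x := by
    apply Over.OverMorphism.ext
    exact congrArg Functor.toCatHom (Over.mapId_eq x)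
  map_comp f g := by
    apply Over.OverMorphism.ext
    exact congrArg Functor.toCatHom (Over.mapComp_eq f g)

namespace CategoryTheory.Over

variable {T : Type*} [Category T]

lemma ext_of_left_eq {X : T} {a b : Over X} (h : a.left = b.left)
    (hhom : a.hom = eqToHom h ≫ b.hom) : a = b := by
  obtain ⟨A, f, rfl⟩ := a.mk_surjective
  obtain ⟨B, g, rfl⟩ := b.mk_surjective
  change A = B at h
  subst h
  simp only [mk_left, mk_hom, eqToHom_refl, Category.id_comp] at hhom
  rw [hhom]

lemma map_injective {X Y : T} : Function.Injective (map : (X ⟶ Y) → (Over X ⥤ Over Y)) := by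
  intro f g h
  simpa using (Over.w (eqToHom (Functor.congr_obj h (mk (𝟙 X))))).symm

lemma exists_eq_map_of_comp_forget_eq {X Y : T} (G : Over X ⥤ Over Y)
    (hG : G ⋙ forget Y = forget X) : ∃ f : X ⟶ Y, G = map f := by
  have hobj (a : Over X) : (G.obj a).left = a.left := Functor.congr_obj hG a
  have hmap {a b : Over X} (m : a ⟶ b) :
      (G.map m).left = eqToHom (hobj a) ≫ m.left ≫ eqToHom (hobj b).symm := by
    simpa using Functor.congr_hom hG m
  let t : Over X := mk (𝟙 X)
  let f : X ⟶ Y := eqToHom (hobj t).symm ≫ (G.obj t).hom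
  have hhom (a : Over X) : (G.obj a).hom = eqToHom (hobj a) ≫ a.hom ≫ f := by
    rw [← Over.w (G.map (homMk a.hom : a ⟶ t)), hmap]
    simp [f, t]
  have hobj' (a : Over X) : G.obj a = (map f).obj a :=
    ext_of_left_eq (hobj a) (by simp [hhom a])
  refine ⟨f, Functor.ext hobj' fun a b m => ?_⟩
  ext
  simp [hmap, eqToHom_left]

end CategoryTheory.Over

instance sliceOverFunctor_full (C : Type u) [SmallCategory C] : (sliceOverFunctor C).Full where
  map_surjective η := by
    obtain ⟨f, hf⟩ := Over.exists_eq_map_of_comp_forget_eq η.left.toFunctor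
      (congrArg Cat.Hom.toFunctor (Over.w η))
    exact ⟨f, Over.OverMorphism.ext (congrArg Functor.toCatHom hf.symm)⟩

instance sliceOverFunctor_faithful (C : Type u) [SmallCategory C] :
    (sliceOverFunctor C).Faithful where
  map_injective h := Over.map_injective (congrArg (fun η => η.left.toFunctor) h)

/-- The functor `C ⥤ Cat/C` given by `x ↦ (Over x, Over.forget x)` and `f ↦ Over.map f`
induces an equivalence between `C` and the full subcategory of `Cat/C` spanned by the slice
projections `Over.forget x`; that is, it exhibits `C` as a full subcategory of `Cat/C`. -/
theorem sliceOverFunctor_isEquivalence_onto_fullSubcategory (C : Type u) [SmallCategory C] :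
    (ObjectProperty.lift
      (fun Z : Over (Cat.of C) =>
        ∃ x : C, Z = Over.mk (Y := Cat.of (Over x)) ((Over.forget x).toCatHom : Cat.of (Over x) ⟶ Cat.of C))
      (sliceOverFunctor C) (fun x => ⟨x, rfl⟩)).IsEquivalence :=
  { essSurj := ⟨fun ⟨_, x, hZ⟩ => ⟨x, ⟨eqToIso (by subst hZ; rfl)⟩⟩⟩ }
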